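/- Let 1 < p < n, α ∈ ℝ, and g(s) = s^{p−1} log^α(e + s). Then g⁻¹(λ) ≃ λ^{1/(p−1)} log^{−α/(p−1)}(e + λ) for λ > 0, with comparison constants depending only on p, α, and n. Consequently ∫_r^{2r} g⁻¹(s^{1−n}) ds ≃ r^{−(n−p)/(p−1)} log^{−α/(p−1)}(e + 1/r) for 0 < r < 1. -/

import Mathlib

/-!
Write `L x = log (e + x)`. Polynomial changes of the argument change `L` only by a bounded
factor: `x ≤ C (e + y)^m` gives `L x ≤ (log 2C + m + 1) L y`. If `s = g⁻¹ λ`, then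
`λ = s^(p-1) L(s)^α` and `s` are polynomially comparable in both directions (for `s ≥ 1` the
factor `L(s)^|α|` is absorbed by `s^((p-1)/2)`), so `L λ ≃ L s`. Since
`g⁻¹ λ = λ^(1/(p-1)) L(g⁻¹ λ)^(-α/(p-1))` exactly, this gives the first estimate. For the second,
`s^(1-n) ≃ r^(1-n)` and `L(s^(1-n)) ≃ L(1/r)` uniformly in `s ∈ [r, 2r]`, and `g⁻¹` is monotone,
hence integrable on `[r, 2r]`.

Comparability is expressed as `=Θ` along principal filters, so that products, real powers and
compositions of comparisons are available as `IsTheta.mul`, `IsTheta.rpow` and composition with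
maps between the underlying sets.
-/

open Real Set Filter Asymptotics MeasureTheory

namespace Asymptotics

variable {ι : Type*} {s : Set ι} {f g : ι → ℝ}

lemma isTheta_principal_of_le {c₁ c₂ : ℝ} (hf : ∀ x ∈ s, 0 ≤ f x)
    (hg : ∀ x ∈ s, 0 ≤ g x) (h₁ : ∀ x ∈ s, f x ≤ c₁ * g x) (h₂ : ∀ x ∈ s, g x ≤ c₂ * f x) :
    f =Θ[𝓟 s] g := by
  refine ⟨isBigO_principal.2 ⟨c₁, fun x hx => ?_⟩, isBigO_principal.2 ⟨c₂, fun x hx => ?_⟩⟩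
  all_goals rw [norm_of_nonneg (hf x hx), norm_of_nonneg (hg x hx)]
  exacts [h₁ x hx, h₂ x hx]

lemma IsTheta.eventually_bounds_principal (h : f =Θ[𝓟 s] g)
    (hf : ∀ x ∈ s, 0 ≤ f x) (hg : ∀ x ∈ s, 0 ≤ g x) :
    ∀ᶠ c in atTop, ∀ x ∈ s, c⁻¹ * g x ≤ f x ∧ f x ≤ c * g x := by
  obtain ⟨c₁, hc₁⟩ := isBigO_principal.1 h.1
  obtain ⟨c₂, hc₂⟩ := isBigO_principal.1 h.2
  filter_upwards [eventually_ge_atTop c₁, eventually_ge_atTop c₂, eventually_gt_atTop 0]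
    with c h₁ h₂ h₀ x hx
  have hfg := hc₁ x hx
  have hgf := hc₂ x hx
  rw [norm_of_nonneg (hf x hx), norm_of_nonneg (hg x hx)] at hfg hgf
  constructor
  · rw [inv_mul_le_iff₀ h₀]
    nlinarith [hf x hx]
  · nlinarith [hg x hx]

lemma IsTheta.comp_tendsto {κ : Type*} {l : Filter ι} {l' : Filter κ} {k : κ → ι}
    (h : f =Θ[l] g) (hk : Tendsto k l' l) : (f ∘ k) =Θ[l'] (g ∘ k) :=
  ⟨h.1.comp_tendsto hk, h.2.comp_tendsto hk⟩

end Asymptotics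

lemma StrictMonoOn.monotoneOn_of_rightInvOn {α β : Type*} [LinearOrder α] [Preorder β]
    {g : α → β} {ginv : β → α} {s : Set α} {t : Set β} (hg : StrictMonoOn g s)
    (hmaps : MapsTo ginv t s) (hinv : RightInvOn ginv g t) : MonotoneOn ginv t :=
  fun x hx y hy hxy => by
    rwa [← hg.le_iff_le (hmaps hx) (hmaps hy), hinv.eq hx, hinv.eq hy]

lemma MonotoneOn.intervalIntegrable_comp_rpow {f : ℝ → ℝ} {ν a b : ℝ} (hf : MonotoneOn f (Ioi 0))
    (hν : ν ≤ 0) (ha : 0 < a) (hab : a ≤ b) :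
    IntervalIntegrable (fun s => f (s ^ ν)) volume a b := by
  refine AntitoneOn.intervalIntegrable fun s hs s' hs' hss' => hf ?_ ?_ ?_
  all_goals rw [uIcc_of_le hab] at hs hs'
  · exact rpow_pos_of_pos (ha.trans_le hs'.1) _
  · exact rpow_pos_of_pos (ha.trans_le hs.1) _
  · exact rpow_le_rpow_of_nonpos (ha.trans_le hs.1) hss' hν

lemma intervalIntegral.integral_bounds_of_forall_mem_Icc {f : ℝ → ℝ} {a b A c : ℝ} (hab : a ≤ b)
    (hf : IntervalIntegrable f volume a b) (h : ∀ x ∈ Icc a b, c⁻¹ * A ≤ f x ∧ f x ≤ c * A) :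
    c⁻¹ * ((b - a) * A) ≤ ∫ x in a..b, f x ∧ ∫ x in a..b, f x ≤ c * ((b - a) * A) := by
  have hlow := integral_mono_on hab intervalIntegrable_const hf fun x hx => (h x hx).1
  have hup := integral_mono_on hab hf intervalIntegrable_const fun x hx => (h x hx).2
  rw [integral_const, smul_eq_mul] at hlow hup
  constructor <;> linarith

lemma one_le_log_exp_add {x : ℝ} (hx : 0 ≤ x) : 1 ≤ log (exp 1 + x) := by
  rw [le_log_iff_exp_le (by positivity)]
  linarith

lemma log_exp_add_nonneg {x : ℝ} (hx : 0 ≤ x) : 0 ≤ log (exp 1 + x) :=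
  zero_le_one.trans (one_le_log_exp_add hx)

lemma log_exp_add_le_of_le_mul_rpow {x y C m : ℝ} (hx : 0 ≤ x) (hy : 0 ≤ y) (hC : 1 ≤ C)
    (hm : 0 ≤ m) (h : x ≤ C * (exp 1 + y) ^ m) :
    log (exp 1 + x) ≤ (log (2 * C) + m + 1) * log (exp 1 + y) := by
  have hy₁ : 1 ≤ exp 1 + y := by linarith [add_one_le_exp 1]
  have hlog := one_le_log_exp_add hy
  have hlogC : 0 ≤ log (2 * C) := log_nonneg (by linarith)
  have hpow : exp 1 + y ≤ (exp 1 + y) ^ (m + 1) := by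
    simpa using rpow_le_rpow_of_exponent_le hy₁ (by linarith : (1:ℝ) ≤ m + 1)
  have hbound : exp 1 + x ≤ 2 * C * (exp 1 + y) ^ (m + 1) := by
    have : (exp 1 + y) ^ m ≤ (exp 1 + y) ^ (m + 1) :=
      rpow_le_rpow_of_exponent_le hy₁ (by linarith)
    nlinarith [rpow_nonneg (by linarith : (0:ℝ) ≤ exp 1 + y) m]
  calc log (exp 1 + x) ≤ log (2 * C * (exp 1 + y) ^ (m + 1)) :=
        log_le_log (by positivity) hbound
    _ = log (2 * C) + (m + 1) * log (exp 1 + y) := by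
        rw [log_mul (by positivity) (by positivity), log_rpow (by positivity)]
    _ ≤ (log (2 * C) + m + 1) * log (exp 1 + y) := by nlinarith

lemma rpow_mul_log_exp_add_rpow_le {s β α : ℝ} (hs : 0 ≤ s) (hβ : 0 ≤ β) :
    s ^ β * log (exp 1 + s) ^ α ≤ (exp 1 + s) ^ (β + |α|) := by
  have hL := one_le_log_exp_add hs
  have hLle : log (exp 1 + s) ≤ exp 1 + s := log_le_self (by positivity)
  rw [rpow_add (by positivity)]
  refine mul_le_mul (by gcongr; linarith [exp_pos 1]) ?_ (by positivity) (by positivity)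
  calc log (exp 1 + s) ^ α ≤ log (exp 1 + s) ^ |α| :=
        rpow_le_rpow_of_exponent_le hL (le_abs_self α)
    _ ≤ (exp 1 + s) ^ |α| := by gcongr

lemma log_exp_add_rpow_le {s a δ : ℝ} (hs : 0 ≤ s) (ha : 0 ≤ a) (hδ : 0 < δ) :
    log (exp 1 + s) ^ a ≤ ((a + 1) / δ) ^ a * (exp 1 + s) ^ δ := by
  set ε := δ / (a + 1) with hε_def
  have hε : 0 < ε := by positivity
  have hX : 1 ≤ exp 1 + s := by linarith [add_one_le_exp 1]
  calc log (exp 1 + s) ^ a ≤ ((exp 1 + s) ^ ε / ε) ^ a := by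
        gcongr
        · exact log_exp_add_nonneg hs
        · exact log_le_rpow_div (by positivity) hε
    _ = ((a + 1) / δ) ^ a * (exp 1 + s) ^ (ε * a) := by
        rw [div_rpow (by positivity) hε.le, ← rpow_mul (by positivity), hε_def,
          div_eq_mul_inv _ (_ ^ a), ← inv_rpow hε.le, inv_div, mul_comm]
    _ ≤ ((a + 1) / δ) ^ a * (exp 1 + s) ^ δ := by
        gcongr
        rw [hε_def, div_mul_eq_mul_div, div_le_iff₀ (by positivity)]
        nlinarith

lemma exists_le_mul_rpow_of_rpow_le_mul_log_rpow {β a : ℝ} (hβ : 0 < β) (ha : 0 ≤ a) :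
    ∃ C ≥ 1, ∀ s t : ℝ, 0 ≤ s → 0 ≤ t → s ^ β ≤ t * log (exp 1 + s) ^ a →
      s ≤ C * (exp 1 + t) ^ (2 / β) := by
  -- for `s ≥ 1`: `L(s)^a ≤ ((a+1)/(β/2))^a (e+s)^(β/2)` and `e + s ≤ 4 s`, so `s^(β/2) ≤ C₁ t`
  set C₁ := ((a + 1) / (β / 2)) ^ a * 4 ^ (β / 2)
  refine ⟨max 1 (C₁ ^ (2 / β)), le_max_left _ _, fun s t hs ht h => ?_⟩
  have ht₁ : 1 ≤ (exp 1 + t) ^ (2 / β) :=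
    one_le_rpow (by linarith [add_one_le_exp 1]) (by positivity)
  rcases le_total s 1 with hs₁ | hs₁
  · nlinarith [le_max_left 1 (C₁ ^ (2 / β))]
  set u := s ^ (β / 2) with hu_def
  have hu₀ : 0 < u := by positivity
  have hsβ : s ^ β = u * u := by rw [hu_def, ← rpow_add (by linarith)]; ring_nf
  have hX : (exp 1 + s) ^ (β / 2) ≤ 4 ^ (β / 2) * u := by
    rw [hu_def, ← mul_rpow (by norm_num) hs]
    gcongr
    linarith [exp_one_lt_d9]
  have hu : u ≤ C₁ * t := by
    have hlog : log (exp 1 + s) ^ a ≤ ((a + 1) / (β / 2)) ^ a * (4 ^ (β / 2) * u) :=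
      (log_exp_add_rpow_le hs ha (half_pos hβ)).trans (by gcongr)
    refine le_of_mul_le_mul_right ?_ hu₀
    calc u * u ≤ t * log (exp 1 + s) ^ a := hsβ ▸ h
      _ ≤ t * (((a + 1) / (β / 2)) ^ a * (4 ^ (β / 2) * u)) := by gcongr
      _ = (C₁ * t) * u := by ring
  calc s = u ^ (2 / β) := by rw [hu_def, ← rpow_mul hs]; field_simp; simp
    _ ≤ (C₁ * t) ^ (2 / β) := by gcongr
    _ = C₁ ^ (2 / β) * t ^ (2 / β) := mul_rpow (by positivity) ht
    _ ≤ max 1 (C₁ ^ (2 / β)) * (exp 1 + t) ^ (2 / β) := by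
        gcongr
        · exact le_max_right _ _
        · linarith [exp_pos 1]

lemma isTheta_log_exp_add_rpow_mul_log_rpow {β : ℝ} (hβ : 0 < β) (α : ℝ) :
    (fun s => log (exp 1 + s ^ β * log (exp 1 + s) ^ α)) =Θ[𝓟 (Ioi 0)]
      fun s => log (exp 1 + s) := by
  obtain ⟨C, hC, hC_bound⟩ := exists_le_mul_rpow_of_rpow_le_mul_log_rpow hβ (abs_nonneg α)
  refine isTheta_principal_of_le (c₁ := log (2 * 1) + (β + |α|) + 1)
    (c₂ := log (2 * C) + 2 / β + 1) (fun s hs => ?_) (fun s hs => ?_) (fun s hs => ?_)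
    (fun s hs => ?_)
  all_goals
    have hs₀ : 0 ≤ s := le_of_lt hs
    have hL := log_exp_add_nonneg hs₀
  · exact log_exp_add_nonneg (by positivity)
  · exact hL
  · exact log_exp_add_le_of_le_mul_rpow (by positivity) hs₀ le_rfl (by positivity)
      ((rpow_mul_log_exp_add_rpow_le hs₀ hβ.le).trans_eq (one_mul _).symm)
  · refine log_exp_add_le_of_le_mul_rpow hs₀ (by positivity) hC (by positivity)
      (hC_bound s _ hs₀ (by positivity) ?_)
    calc s ^ β = s ^ β * log (exp 1 + s) ^ α * log (exp 1 + s) ^ (-α) := by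
          rw [mul_assoc, ← rpow_add (by linarith [one_le_log_exp_add hs₀]), add_neg_cancel,
            rpow_zero, mul_one]
      _ ≤ s ^ β * log (exp 1 + s) ^ α * log (exp 1 + s) ^ |α| := by
          gcongr
          · exact one_le_log_exp_add hs₀
          · exact neg_le_abs α

theorem isTheta_inv_of_eq_rpow_mul_log_rpow {β α : ℝ} (hβ : 0 < β) {g ginv : ℝ → ℝ}
    (hg : ∀ s, 0 < s → g s = s ^ β * log (exp 1 + s) ^ α)
    (hinv : ∀ t, 0 < t → 0 < ginv t ∧ g (ginv t) = t) :
    ginv =Θ[𝓟 (Ioi 0)] fun t => t ^ (1 / β) * log (exp 1 + t) ^ (-α / β) := by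
  have hmaps : Tendsto ginv (𝓟 (Ioi 0)) (𝓟 (Ioi 0)) :=
    tendsto_principal_principal.2 fun t ht => (hinv t ht).1
  have hlog : (fun t => log (exp 1 + ginv t)) =Θ[𝓟 (Ioi 0)] fun t => log (exp 1 + t) := by
    refine ((isTheta_log_exp_add_rpow_mul_log_rpow hβ α).comp_tendsto hmaps).symm
      |>.trans_eventuallyEq ?_
    filter_upwards [mem_principal_self _] with t ht
    simp only [Function.comp, ← hg _ (hinv t ht).1, (hinv t ht).2]
  have hpow := hlog.rpow (r := -α / β)
    (eventually_principal.2 fun t ht => log_exp_add_nonneg (hinv t ht).1.le)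
    (eventually_principal.2 fun t ht => log_exp_add_nonneg (le_of_lt ht))
  refine EventuallyEq.trans_isTheta ?_ ((isTheta_refl (fun t : ℝ => t ^ (1 / β)) _).mul hpow)
  filter_upwards [mem_principal_self _] with t ht
  obtain ⟨hs, hgs⟩ := hinv t ht
  set s := ginv t
  have hL := log_exp_add_nonneg hs.le
  rw [← hgs, hg s hs, mul_rpow (by positivity) (by positivity), ← rpow_mul hs.le,
    ← rpow_mul hL, mul_assoc, ← rpow_add (by linarith [one_le_log_exp_add hs.le])]
  field_simp
  simp

def dyadicPairs : Set (ℝ × ℝ) := {q | 0 < q.1 ∧ q.2 ∈ Icc q.1 (2 * q.1)}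

lemma isTheta_rpow_snd_rpow_fst_dyadicPairs {ν : ℝ} (hν : ν ≤ 0) :
    (fun q : ℝ × ℝ => q.2 ^ ν) =Θ[𝓟 dyadicPairs] fun q => q.1 ^ ν := by
  refine isTheta_principal_of_le (c₁ := 1) (c₂ := 2 ^ (-ν)) (fun q hq => ?_) (fun q hq => ?_)
    (fun q hq => ?_) (fun q hq => ?_)
  all_goals obtain ⟨hr, hrs, hs2r⟩ := hq
  · exact rpow_nonneg (by linarith) _
  · exact rpow_nonneg hr.le _
  · rw [one_mul]; exact rpow_le_rpow_of_nonpos hr hrs hν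
  · calc q.1 ^ ν = 2 ^ (-ν) * (2 * q.1) ^ ν := by
          rw [mul_rpow zero_le_two hr.le, ← mul_assoc, ← rpow_add zero_lt_two]; simp
      _ ≤ 2 ^ (-ν) * q.2 ^ ν :=
          mul_le_mul_of_nonneg_left (rpow_le_rpow_of_nonpos (by linarith) hs2r hν) (by positivity)

lemma isTheta_log_exp_add_rpow_dyadicPairs {ν : ℝ} (hν : ν < 0) :
    (fun q : ℝ × ℝ => log (exp 1 + q.2 ^ ν)) =Θ[𝓟 dyadicPairs]
      fun q => log (exp 1 + 1 / q.1) := by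
  refine isTheta_principal_of_le (c₁ := log (2 * 1) + -ν + 1) (c₂ := log (2 * 2) + -ν⁻¹ + 1)
    (fun q hq => ?_) (fun q hq => ?_) (fun q hq => ?_) (fun q hq => ?_)
  all_goals obtain ⟨hr, hrs, hs2r⟩ := hq
  all_goals have hs : 0 < q.2 := by linarith
  · exact log_exp_add_nonneg (by positivity)
  · exact log_exp_add_nonneg (by positivity)
  · refine log_exp_add_le_of_le_mul_rpow (by positivity) (by positivity) le_rfl (by linarith) ?_
    calc q.2 ^ ν ≤ q.1 ^ ν := rpow_le_rpow_of_nonpos hr hrs hν.le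
      _ = (1 / q.1) ^ (-ν) := by rw [one_div, inv_rpow hr.le, ← rpow_neg hr.le, neg_neg]
      _ ≤ 1 * (exp 1 + 1 / q.1) ^ (-ν) := by
          rw [one_mul]
          exact rpow_le_rpow (by positivity) (by linarith [exp_pos 1]) (by linarith)
  · refine log_exp_add_le_of_le_mul_rpow (by positivity) (by positivity) one_le_two
      (by simpa using hν.le) ?_
    calc 1 / q.1 ≤ 2 / q.2 := by rw [div_le_div_iff₀ hr hs]; linarith
      _ = 2 * (q.2 ^ ν) ^ (-ν⁻¹) := by
          rw [← rpow_mul hs.le, mul_neg, mul_inv_cancel₀ hν.ne, rpow_neg_one, div_eq_mul_inv]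
      _ ≤ 2 * (exp 1 + q.2 ^ ν) ^ (-ν⁻¹) := by
          gcongr
          · simpa using hν.le
          · linarith [exp_pos 1]

lemma Asymptotics.IsTheta.comp_rpow_dyadicPairs {f : ℝ → ℝ} {a b ν : ℝ} (hν : ν < 0)
    (h : f =Θ[𝓟 (Ioi 0)] fun t => t ^ a * log (exp 1 + t) ^ b) :
    (fun q : ℝ × ℝ => f (q.2 ^ ν)) =Θ[𝓟 dyadicPairs]
      fun q => (q.1 ^ ν) ^ a * log (exp 1 + 1 / q.1) ^ b := by
  have hpos : ∀ q ∈ dyadicPairs, 0 < q.1 ∧ 0 < q.2 := fun q ⟨hr, hrs, _⟩ => ⟨hr, by linarith⟩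
  have hmaps : Tendsto (fun q : ℝ × ℝ => q.2 ^ ν) (𝓟 dyadicPairs) (𝓟 (Ioi 0)) :=
    tendsto_principal_principal.2 fun q hq => rpow_pos_of_pos (hpos q hq).2 _
  refine (h.comp_tendsto hmaps).trans (IsTheta.mul ?_ ?_)
  · exact (isTheta_rpow_snd_rpow_fst_dyadicPairs hν.le).rpow
      (eventually_principal.2 fun q hq => (rpow_pos_of_pos (hpos q hq).2 _).le)
      (eventually_principal.2 fun q hq => (rpow_pos_of_pos (hpos q hq).1 _).le)
  · exact (isTheta_log_exp_add_rpow_dyadicPairs hν).rpow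
      (eventually_principal.2 fun q hq =>
        log_exp_add_nonneg (rpow_pos_of_pos (hpos q hq).2 _).le)
      (eventually_principal.2 fun q hq => log_exp_add_nonneg (one_div_pos.2 (hpos q hq).1).le)

theorem zygmund_ginv_asymptotics_general
    (n : ℕ) (p α : ℝ) (hn : 2 ≤ n) (hp1 : 1 < p)
    (g ginv : ℝ → ℝ)
    (hg : ∀ s, 0 < s → g s = s ^ (p - 1) * (Real.log (Real.exp 1 + s)) ^ α)
    (hgmono : StrictMonoOn g (Set.Ioi 0))
    (hinv : ∀ t, 0 < t → 0 < ginv t ∧ g (ginv t) = t) :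
    ∃ c > 0,
      (∀ lam : ℝ, 0 < lam →
        c⁻¹ * (lam ^ ((1:ℝ)/(p - 1)) * (Real.log (Real.exp 1 + lam)) ^ (-α/(p - 1)))
            ≤ ginv lam ∧
        ginv lam
            ≤ c * (lam ^ ((1:ℝ)/(p - 1)) * (Real.log (Real.exp 1 + lam)) ^ (-α/(p - 1)))) ∧
      (∀ r : ℝ, 0 < r → r < 1 →
        c⁻¹ * (r ^ (-((n:ℝ) - p)/(p - 1)) * (Real.log (Real.exp 1 + 1/r)) ^ (-α/(p - 1)))
            ≤ (∫ s in r..(2*r), ginv (s ^ ((1:ℝ) - n))) ∧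
        (∫ s in r..(2*r), ginv (s ^ ((1:ℝ) - n)))
            ≤ c * (r ^ (-((n:ℝ) - p)/(p - 1)) * (Real.log (Real.exp 1 + 1/r)) ^ (-α/(p - 1)))) := by
  have hβ : 0 < p - 1 := by linarith
  have hν : (1:ℝ) - n < 0 := by
    have : (2:ℝ) ≤ n := by exact_mod_cast hn
    linarith
  have hΘ := isTheta_inv_of_eq_rpow_mul_log_rpow hβ hg hinv
  have hbounds₁ := hΘ.eventually_bounds_principal (fun t ht => (hinv t ht).1.le)
    fun t ht => mul_nonneg (rpow_nonneg (le_of_lt ht) _)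
      (rpow_nonneg (log_exp_add_nonneg (le_of_lt ht)) _)
  have hbounds₂ := (hΘ.comp_rpow_dyadicPairs hν).eventually_bounds_principal
    (fun q ⟨hr, hrs, _⟩ => (hinv _ (rpow_pos_of_pos (hr.trans_le hrs) _)).1.le)
    fun q ⟨hr, _⟩ => mul_nonneg (rpow_nonneg (rpow_nonneg hr.le _) _)
      (rpow_nonneg (log_exp_add_nonneg (one_div_pos.2 hr).le) _)
  obtain ⟨c, hc₁, hc₂, hc⟩ := (hbounds₁.and (hbounds₂.and (eventually_gt_atTop 0))).exists
  refine ⟨c, hc, hc₁, fun r hr _ => ?_⟩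
  have hmono : MonotoneOn ginv (Ioi 0) :=
    hgmono.monotoneOn_of_rightInvOn (fun t ht => (hinv t ht).1) fun t ht => (hinv t ht).2
  have hexp : r * (r ^ ((1:ℝ) - n)) ^ (1 / (p - 1)) = r ^ (-((n:ℝ) - p) / (p - 1)) := by
    rw [← rpow_mul hr.le, mul_comm, ← rpow_add_one hr.ne']
    congr 1
    field_simp
    ring
  have hr₂ : r ≤ 2 * r := by linarith
  have := intervalIntegral.integral_bounds_of_forall_mem_Icc hr₂
    (hmono.intervalIntegrable_comp_rpow hν.le hr hr₂)
    (A := (r ^ ((1:ℝ) - n)) ^ (1 / (p - 1)) * log (exp 1 + 1 / r) ^ (-α / (p - 1)))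
    fun s hs => hc₂ (r, s) ⟨hr, hs⟩
  rwa [show 2 * r - r = r by ring, ← mul_assoc r, hexp] at this

/-- For the Zygmund-type function `g(s) = s^{p-1} log^α(e+s)` with `1 < p < n`,
the inverse satisfies `g⁻¹(λ) ≃ λ^{1/(p-1)} log^{-α/(p-1)}(e+λ)` and consequently
`∫_r^{2r} g⁻¹(s^{1-n}) ds ≃ r^{-(n-p)/(p-1)} log^{-α/(p-1)}(e + 1/r)` for `0 < r < 1`. -/
theorem zygmund_ginv_asymptotics
    (n : ℕ) (p α : ℝ) (hn : 2 ≤ n) (hp1 : 1 < p) (hpn : p < n)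
    (g ginv : ℝ → ℝ)
    (hg : ∀ s, 0 < s → g s = s ^ (p - 1) * (Real.log (Real.exp 1 + s)) ^ α)
    (hgmono : StrictMonoOn g (Set.Ioi 0))
    (hinv : ∀ t, 0 < t → 0 < ginv t ∧ g (ginv t) = t)
    (hinv' : ∀ s, 0 < s → ginv (g s) = s) :
    ∃ c > 0,
      (∀ lam : ℝ, 0 < lam →
        c⁻¹ * (lam ^ ((1:ℝ)/(p - 1)) * (Real.log (Real.exp 1 + lam)) ^ (-α/(p - 1)))
            ≤ ginv lam ∧
        ginv lam
            ≤ c * (lam ^ ((1:ℝ)/(p - 1)) * (Real.log (Real.exp 1 + lam)) ^ (-α/(p - 1)))) ∧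
      (∀ r : ℝ, 0 < r → r < 1 →
        c⁻¹ * (r ^ (-((n:ℝ) - p)/(p - 1)) * (Real.log (Real.exp 1 + 1/r)) ^ (-α/(p - 1)))
            ≤ (∫ s in r..(2*r), ginv (s ^ ((1:ℝ) - n))) ∧
        (∫ s in r..(2*r), ginv (s ^ ((1:ℝ) - n)))
            ≤ c * (r ^ (-((n:ℝ) - p)/(p - 1)) * (Real.log (Real.exp 1 + 1/r)) ^ (-α/(p - 1)))) :=
  zygmund_ginv_asymptotics_general n p α hn hp1 g ginv hg hgmono hinv
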